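/- The bypass relaxation S' for task t* does not create new cycles among tasks other than t*: if the original relation S⁰ is acyclic, then the relaxed relation S' = (S⁰ minus edges incident to t*) plus (P × Q), where P and Q are the predecessors and successors of t* in S⁰, is also acyclic. -/
import Mathlib

/-- The bypass relaxation for `t*` preserves acyclicity: if the original
relation `S⁰` is acyclic (its transitive closure is irreflexive), then the
relaxed relation `S'` — obtained by removing all edges incident to `t*` and
adding `P × Q` for the predecessor set `P` and successor set `Q` of `t*` — is
also acyclic. -/
theorem stmt18 {J : Type*} (S0 S' : J → J → Prop) (tstar : J)
    (hS' : ∀ i j, S' i j ↔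
      (S0 i j ∧ i ≠ tstar ∧ j ≠ tstar) ∨ (S0 i tstar ∧ S0 tstar j))
    (hacyc : ∀ a : J, ¬ Relation.TransGen S0 a a) :
    ∀ a : J, ¬ Relation.TransGen S' a a := by
  have key : ∀ i j, S' i j → Relation.TransGen S0 i j := by
    intro i j h
    rcases (hS' i j).mp h with ⟨h1, _, _⟩ | ⟨h1, h2⟩
    · exact Relation.TransGen.single h1
    · exact Relation.TransGen.head h1 (Relation.TransGen.single h2)
  have sub : ∀ a b, Relation.TransGen S' a b → Relation.TransGen S0 a b := by
    intro a b h
    induction h with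
    | single h => exact key _ _ h
    | tail _ h ih => exact ih.trans (key _ _ h)
  exact fun a ha => hacyc a (sub a a ha)
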